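/- Let N1 and N2 be S-DAGs such that neither contains two distinct equivalent nodes. Then the multisets of equivalence classes of nodes of N1 and N2 coincide if and only if N1 and N2 are isomorphic as S-DAGs (via a label-preserving directed graph isomorphism). -/

import Mathlib

open scoped Classical

/-- A finite directed acyclic graph whose leaves are (injectively) labeled in `S`. -/
structure LDag (S : Type) : Type 1 where
  V : Type
  fin : Fintype V
  adj : V → V → Prop
  acyclic : WellFounded (fun a b => adj b a)
  lab : V → S
  labInj : ∀ u v : V, (∀ w, ¬ adj u w) → (∀ w, ¬ adj v w) → lab u = lab v → u = v

attribute [instance] LDag.fin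

namespace LDag

variable {S : Type}

/-- A leaf is a node with no children. -/
def IsLeaf (N : LDag S) (v : N.V) : Prop := ∀ w, ¬ N.adj v w

/-- `v` is a descendant of `u` (every node is a descendant of itself). -/
def Desc (N : LDag S) (u v : N.V) : Prop := Relation.ReflTransGen N.adj u v

/-- The cluster of `u`: the set of labels of the leaves that are descendants of `u`. -/
def cluster (N : LDag S) (u : N.V) : Set S :=
  {s | ∃ v, N.Desc u v ∧ N.IsLeaf v ∧ N.lab v = s}

/-- A tree node: a node with at most one parent. -/
def TreeNode (N : LDag S) (v : N.V) : Prop :=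
  ∀ p q, N.adj p v → N.adj q v → p = q

/-- A root: a node with no parents. -/
def IsRoot (N : LDag S) (r : N.V) : Prop := ∀ u, ¬ N.adj u r

/-- Tree-child: every internal node has a child that is a tree node. -/
def TreeChild (N : LDag S) : Prop :=
  ∀ v, ¬ N.IsLeaf v → ∃ w, N.adj v w ∧ N.TreeNode w

/-- `PathN N u v k`: there is a directed path of length `k` from `u` to `v`. -/
inductive PathN (N : LDag S) : N.V → N.V → ℕ → Prop
  | refl (v : N.V) : PathN N v v 0
  | cons {u v w : N.V} {k : ℕ} : N.adj u v → PathN N v w k → PathN N u w (k + 1)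

/-- The height of a node: the largest length of a directed path from it to a leaf. -/
noncomputable def height (N : LDag S) (v : N.V) : ℕ :=
  sSup {k | ∃ s, N.IsLeaf s ∧ PathN N v s k}

/-- Node equivalence between (possibly equal) labeled DAGs, defined recursively:
two leaves with the same label are equivalent, and two internal nodes are equivalent
when their children can be matched into equivalent pairs. -/
noncomputable def equivTo (N1 N2 : LDag S) : N1.V → N2.V → Prop :=
  N1.acyclic.fix (fun u ih v =>
    (N1.IsLeaf u ∧ N2.IsLeaf v ∧ N1.lab u = N2.lab v) ∨
    (¬ N1.IsLeaf u ∧ ¬ N2.IsLeaf v ∧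
      ∃ f : {w // N1.adj u w} ≃ {w // N2.adj v w},
        ∀ w : {w // N1.adj u w}, ih w.1 w.2 (f w).1))

end LDag

/-- Pre-nested labels: finitely branching trees of labels (multisets are obtained
as a quotient by `NEq` below). -/
inductive PreNested (S : Type) : Type
  | leaf : S → PreNested S
  | node : List (PreNested S) → PreNested S

/-- Equality of pre-nested labels as nested multisets. -/
inductive NEq {S : Type} : PreNested S → PreNested S → Prop
  | leaf (a : S) : NEq (.leaf a) (.leaf a)
  | node {l m : List (PreNested S)} : List.Forall₂ NEq l m → NEq (.node l) (.node m)
  | perm {l m : List (PreNested S)} : l.Perm m → NEq (.node l) (.node m)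
  | symm {a b : PreNested S} : NEq a b → NEq b a
  | trans {a b c : PreNested S} : NEq a b → NEq b c → NEq a c

mutual
  theorem NEq.refl {S : Type} : ∀ a : PreNested S, NEq a a
    | .leaf s => .leaf s
    | .node l => .node (NEq.reflL l)
  theorem NEq.reflL {S : Type} : ∀ l : List (PreNested S), List.Forall₂ NEq l l
    | [] => .nil
    | a :: l => .cons (NEq.refl a) (NEq.reflL l)
end

instance PreNested.setoid (S : Type) : Setoid (PreNested S) :=
  ⟨NEq, ⟨NEq.refl, fun h => h.symm, fun h1 h2 => h1.trans h2⟩⟩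

/-- Nested multisets (of multisets of ...) of labels. -/
def Nested (S : Type) : Type := Quotient (PreNested.setoid S)

/-- `TaxaIn s p`: the taxon `s` occurs somewhere (at any nesting depth) in `p`. -/
inductive TaxaIn {S : Type} : S → PreNested S → Prop
  | leaf (s : S) : TaxaIn s (.leaf s)
  | node {s : S} {p : PreNested S} {l : List (PreNested S)} :
      p ∈ l → TaxaIn s p → TaxaIn s (.node l)

mutual
  /-- Nesting depth of a pre-nested label: a singleton `{s}` has depth 1. -/
  def depthP {S : Type} : PreNested S → ℕ
    | .leaf _ => 1
    | .node l => depthL l + 1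
  def depthL {S : Type} : List (PreNested S) → ℕ
    | [] => 0
    | p :: ps => max (depthP p) (depthL ps)
end

namespace LDag

variable {S : Type}

/-- The nested label of a node: the singleton of its label for a leaf, and the
multiset of the nested labels of its children otherwise. -/
noncomputable def nested (N : LDag S) : N.V → Nested S :=
  N.acyclic.fix (fun v ih =>
    if h : N.IsLeaf v then (⟦PreNested.leaf (N.lab v)⟧ : Nested S)
    else ⟦PreNested.node (((Finset.univ.filter (fun w => N.adj v w)).attach.toList).map
        (fun w => (ih w.1 (Finset.mem_filter.mp w.2).2).out))⟧)

/-- `Υ(N)`: the multiset of equivalence classes (= nested labels) of the nodes of `N`,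
with multiplicities. -/
noncomputable def UpsilonM (N : LDag S) : Multiset (Nested S) :=
  Finset.univ.val.map N.nested

/-- Label-preserving isomorphisms of labeled DAGs. -/
structure Iso (N1 N2 : LDag S) where
  toEquiv : N1.V ≃ N2.V
  adj_iff : ∀ u v : N1.V, N2.adj (toEquiv u) (toEquiv v) ↔ N1.adj u v
  lab_leaf : ∀ v : N1.V, N1.IsLeaf v → N2.lab (toEquiv v) = N1.lab v

def IsIso (N1 N2 : LDag S) : Prop := Nonempty (Iso N1 N2)

theorem Iso.leaf_map {N1 N2 : LDag S} (e : Iso N1 N2) {v : N1.V} (h : N1.IsLeaf v) :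
    N2.IsLeaf (e.toEquiv v) := by
  intro w hw
  have hw' : N2.adj (e.toEquiv v) (e.toEquiv (e.toEquiv.symm w)) := by simpa using hw
  exact h _ ((e.adj_iff _ _).mp hw')

def Iso.refl (N : LDag S) : Iso N N :=
  ⟨Equiv.refl _, fun _ _ => Iff.rfl, fun _ _ => rfl⟩

def Iso.symm {N1 N2 : LDag S} (e : Iso N1 N2) : Iso N2 N1 where
  toEquiv := e.toEquiv.symm
  adj_iff u v := by rw [← e.adj_iff]; simp
  lab_leaf v hv := by
    have h1 : N1.IsLeaf (e.toEquiv.symm v) := by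
      intro w hw
      have : N2.adj v (e.toEquiv w) := by
        have := (e.adj_iff (e.toEquiv.symm v) w).mpr hw
        simpa using this
      exact hv _ this
    have := e.lab_leaf _ h1
    simpa using this.symm

def Iso.trans {N1 N2 N3 : LDag S} (e : Iso N1 N2) (f : Iso N2 N3) : Iso N1 N3 where
  toEquiv := e.toEquiv.trans f.toEquiv
  adj_iff u v := by
    simp only [Equiv.trans_apply]
    rw [f.adj_iff, e.adj_iff]
  lab_leaf v hv := by
    simp only [Equiv.trans_apply]
    rw [f.lab_leaf _ (e.leaf_map hv), e.lab_leaf _ hv]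

instance isoSetoid (S : Type) : Setoid (LDag S) :=
  ⟨IsIso, ⟨fun N => ⟨Iso.refl N⟩, fun ⟨e⟩ => ⟨e.symm⟩, fun ⟨e⟩ ⟨f⟩ => ⟨e.trans f⟩⟩⟩

/-- Isomorphism classes of labeled DAGs. -/
def IsoClass (S : Type) : Type 1 := Quotient (isoSetoid S)

/-- The rooted subnetwork `N(u)` generated by a node `u`: the induced subgraph on
the set of descendants of `u`. -/
noncomputable def subnet (N : LDag S) (u : N.V) : LDag S where
  V := {v // N.Desc u v}
  fin := Subtype.fintype _
  adj a b := N.adj a.1 b.1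
  acyclic := by
    have h : (fun (a b : {v // N.Desc u v}) => N.adj b.1 a.1) =
        InvImage (fun a b => N.adj b a) Subtype.val := rfl
    rw [h]
    exact InvImage.wf _ N.acyclic
  lab v := N.lab v.1
  labInj := by
    intro a b ha hb hlab
    apply Subtype.ext
    refine N.labInj a.1 b.1 ?_ ?_ hlab
    · intro w hw
      exact ha ⟨w, a.2.trans (Relation.ReflTransGen.single hw)⟩ hw
    · intro w hw
      exact hb ⟨w, b.2.trans (Relation.ReflTransGen.single hw)⟩ hw

/-- `Σ(N)`: the multiset of isomorphism classes of the rooted subnetworks generated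
by the nodes of `N`, with multiplicities. -/
noncomputable def SigmaM (N : LDag S) : Multiset (IsoClass S) :=
  Finset.univ.val.map (fun u => (Quotient.mk (isoSetoid S) (N.subnet u) : IsoClass S))

/-- Nakhleh's dissimilarity `m(N1,N2) = |Υ(N1) △ Υ(N2)| / 2`. -/
noncomputable def mDist (N1 N2 : LDag S) : ℝ :=
  (((N1.UpsilonM - N2.UpsilonM) + (N2.UpsilonM - N1.UpsilonM)).card : ℝ) / 2

/-- The distance `σ(N1,N2) = |Σ(N1) △ Σ(N2)| / 2`. -/
noncomputable def sigmaDist (N1 N2 : LDag S) : ℝ :=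
  (((N1.SigmaM - N2.SigmaM) + (N2.SigmaM - N1.SigmaM)).card : ℝ) / 2

end LDag

/-- An `S`-DAG: a labeled DAG whose leaves are bijectively labeled by `S`. -/
structure SDag (S : Type) extends LDag S where
  surjLab : ∀ s : S, ∃ v, toLDag.IsLeaf v ∧ toLDag.lab v = s

/-- A phylogenetic network on `S`: a rooted `S`-DAG. -/
structure PhyloNetwork (S : Type) extends SDag S where
  rooted : ∃! r, toLDag.IsRoot r

/-!
A node's nested label records, up to permutation, the nested labels of its children. When no
two distinct nodes are equivalent, a node is determined by its nested label: nodes with equal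
nested labels have, by induction, the same children, hence are equivalent. So equal multisets
`Υ` yield a bijection of nodes preserving nested labels, and it preserves edges because the
children of a node are exactly the nodes whose nested labels occur in its own. Conversely an
isomorphism preserves nested labels, by induction from the leaves.
-/

namespace PreNested

variable {S : Type}

def toNested (a : PreNested S) : Nested S := ⟦a⟧

theorem toNested_out (x : Nested S) : toNested x.out = x := Quotient.out_eq x

theorem toNested_eq_toNested {a b : PreNested S} (h : NEq a b) : toNested a = toNested b :=
  Quotient.sound h

/-- `NEq` unfolded one level; inverting `NEq` amounts to showing that it implies this. -/
def TopEq : PreNested S → PreNested S → Prop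
  | .leaf a, .leaf b => a = b
  | .node l, .node m => (l.map toNested).Perm (m.map toNested)
  | _, _ => False

theorem TopEq.symm : ∀ {a b : PreNested S}, TopEq a b → TopEq b a
  | .leaf _, .leaf _, h => Eq.symm h
  | .node _, .node _, h => List.Perm.symm h

theorem TopEq.trans : ∀ {a b c : PreNested S}, TopEq a b → TopEq b c → TopEq a c
  | .leaf _, .leaf _, .leaf _, h, h' => Eq.trans h h'
  | .node _, .node _, .node _, h, h' => List.Perm.trans h h'

theorem topEq_of_nEq {a b : PreNested S} (h : NEq a b) : TopEq a b := by
  refine NEq.rec (motive_1 := fun a b _ => TopEq a b)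
    (motive_2 := fun l m _ => l.map toNested = m.map toNested)
    (fun _ => rfl) (fun _ hlm => List.Perm.of_eq hlm) (fun hlm => hlm.map _)
    (fun _ => TopEq.symm) (fun _ _ => TopEq.trans) rfl ?_ h
  intro a b l m hab _ _ hlm
  rw [List.map_cons, List.map_cons, hlm, toNested_eq_toNested hab]

theorem toNested_leaf_eq_iff {a b : S} : toNested (.leaf a) = toNested (.leaf b) ↔ a = b :=
  ⟨fun h => topEq_of_nEq (Quotient.exact h), fun h => h ▸ rfl⟩

theorem toNested_leaf_ne_node (a : S) (l : List (PreNested S)) :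
    toNested (.leaf a) ≠ toNested (.node l) :=
  fun h => topEq_of_nEq (Quotient.exact h)

theorem nEq_node_map_out (l : List (PreNested S)) :
    NEq (.node l) (.node ((l.map toNested).map Quotient.out)) :=
  .node <| List.forall₂_map_right_iff.mpr <| List.forall₂_map_right_iff.mpr <|
    List.forall₂_same.mpr fun a _ => .symm (Quotient.exact (toNested_out (toNested a)))

theorem toNested_node_eq_iff {l m : List (PreNested S)} :
    toNested (.node l) = toNested (.node m) ↔
      (l : Multiset (PreNested S)).map toNested = (m : Multiset (PreNested S)).map toNested := by
  rw [Multiset.map_coe, Multiset.map_coe, Multiset.coe_eq_coe]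
  refine ⟨fun h => topEq_of_nEq (Quotient.exact h), fun h => toNested_eq_toNested ?_⟩
  -- both sides are `NEq` to the list of representatives of their classes
  exact (nEq_node_map_out l).trans
    ((NEq.perm (h.map Quotient.out)).trans (nEq_node_map_out m).symm)

end PreNested

theorem Function.Injective.exists_equiv_of_map_univ_eq {α β γ : Type*} [Fintype α]
    [Fintype β] {f : α → γ} {g : β → γ} (hf : f.Injective) (hg : g.Injective)
    (h : Finset.univ.val.map f = Finset.univ.val.map g) :
    ∃ e : α ≃ β, ∀ a, g (e a) = f a := by
  have hrange : Set.range f = Set.range g := by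
    ext x
    simpa using congrArg (x ∈ ·) h
  exact ⟨(Equiv.ofInjective f hf).trans
      ((Equiv.setCongr hrange).trans (Equiv.ofInjective g hg).symm),
    fun a => Equiv.apply_ofInjective_symm hg _⟩

namespace LDag

variable {S : Type}

theorem equivTo_iff (N1 N2 : LDag S) (u : N1.V) (v : N2.V) :
    N1.equivTo N2 u v ↔
      (N1.IsLeaf u ∧ N2.IsLeaf v ∧ N1.lab u = N2.lab v) ∨
      (¬ N1.IsLeaf u ∧ ¬ N2.IsLeaf v ∧
        ∃ f : {w // N1.adj u w} ≃ {w // N2.adj v w},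
          ∀ w : {w // N1.adj u w}, N1.equivTo N2 w.1 (f w).1) := by
  unfold equivTo
  rw [WellFounded.fix_eq]

theorem equivTo_refl (N : LDag S) (v : N.V) : N.equivTo N v v := by
  induction v using N.acyclic.induction with
  | _ v ih =>
  rw [equivTo_iff]
  by_cases hv : N.IsLeaf v
  · exact .inl ⟨hv, hv, rfl⟩
  · exact .inr ⟨hv, hv, Equiv.refl _, fun w => ih w.1 w.2⟩

theorem equivTo_of_adj_iff {N : LDag S} {u v : N.V} (hu : ¬ N.IsLeaf u)
    (h : ∀ w, N.adj u w ↔ N.adj v w) : N.equivTo N u v := by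
  have hv : ¬ N.IsLeaf v := fun hv => hu fun w huw => hv w ((h w).mp huw)
  rw [equivTo_iff]
  exact .inr ⟨hu, hv, Equiv.subtypeEquivRight h, fun w => N.equivTo_refl w.1⟩

noncomputable def children (N : LDag S) (v : N.V) : Finset N.V :=
  Finset.univ.filter (N.adj v)

@[simp]
theorem mem_children {N : LDag S} {v w : N.V} : w ∈ N.children v ↔ N.adj v w := by
  simp [children]

noncomputable def nestedChildren (N : LDag S) (v : N.V) : Multiset (Nested S) :=
  (N.children v).val.map N.nested

theorem mem_nestedChildren {N : LDag S} {v : N.V} {x : Nested S} :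
    x ∈ N.nestedChildren v ↔ ∃ w, N.adj v w ∧ N.nested w = x := by
  simp [nestedChildren]

theorem nestedChildren_of_isLeaf {N : LDag S} {v : N.V} (hv : N.IsLeaf v) :
    N.nestedChildren v = 0 := by
  simpa [nestedChildren, Finset.eq_empty_iff_forall_notMem] using fun w => hv w

theorem nested_eq (N : LDag S) (v : N.V) :
    N.nested v = if _ : N.IsLeaf v then PreNested.toNested (.leaf (N.lab v))
      else PreNested.toNested
        (.node ((N.children v).attach.toList.map fun w => (N.nested w.1).out)) := by
  rw [nested, WellFounded.fix_eq]
  rfl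

theorem nested_of_isLeaf {N : LDag S} {v : N.V} (hv : N.IsLeaf v) :
    N.nested v = PreNested.toNested (.leaf (N.lab v)) := by
  rw [nested_eq, dif_pos hv]

theorem exists_nested_eq_toNested_node {N : LDag S} {v : N.V} (hv : ¬ N.IsLeaf v) :
    ∃ l, N.nested v = PreNested.toNested (.node l) ∧
      (l : Multiset (PreNested S)).map PreNested.toNested = N.nestedChildren v := by
  refine ⟨_, by rw [nested_eq, dif_neg hv], ?_⟩
  rw [← Multiset.map_coe, Finset.coe_toList, Multiset.map_map, Finset.attach_val]
  simp only [Function.comp_def, PreNested.toNested_out]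
  exact Multiset.attach_map_val' _ _

theorem nested_eq_nested_iff {N1 N2 : LDag S} {u : N1.V} {v : N2.V} :
    N1.nested u = N2.nested v ↔
      (N1.IsLeaf u ∧ N2.IsLeaf v ∧ N1.lab u = N2.lab v) ∨
      (¬ N1.IsLeaf u ∧ ¬ N2.IsLeaf v ∧ N1.nestedChildren u = N2.nestedChildren v) := by
  by_cases hu : N1.IsLeaf u <;> by_cases hv : N2.IsLeaf v
  · rw [nested_of_isLeaf hu, nested_of_isLeaf hv, PreNested.toNested_leaf_eq_iff]
    simp [hu, hv]
  · obtain ⟨m, hm, -⟩ := exists_nested_eq_toNested_node hv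
    rw [nested_of_isLeaf hu, hm]
    exact iff_of_false (PreNested.toNested_leaf_ne_node _ m) (by simp [hu, hv])
  · obtain ⟨l, hl, -⟩ := exists_nested_eq_toNested_node hu
    rw [nested_of_isLeaf hv, hl]
    exact iff_of_false (PreNested.toNested_leaf_ne_node _ l).symm (by simp [hu, hv])
  · obtain ⟨l, hl, hlc⟩ := exists_nested_eq_toNested_node hu
    obtain ⟨m, hm, hmc⟩ := exists_nested_eq_toNested_node hv
    rw [hl, hm, PreNested.toNested_node_eq_iff, hlc, hmc]
    simp [hu, hv]

theorem nestedChildren_eq_of_nested_eq {N1 N2 : LDag S} {u : N1.V} {v : N2.V}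
    (h : N1.nested u = N2.nested v) : N1.nestedChildren u = N2.nestedChildren v := by
  rcases nested_eq_nested_iff.mp h with ⟨hu, hv, -⟩ | ⟨-, -, hc⟩
  · rw [nestedChildren_of_isLeaf hu, nestedChildren_of_isLeaf hv]
  · exact hc

theorem adj_iff_nested_mem_nestedChildren {N : LDag S} (hN : N.nested.Injective) {u w : N.V} :
    N.adj u w ↔ N.nested w ∈ N.nestedChildren u := by
  rw [mem_nestedChildren]
  exact ⟨fun h => ⟨w, h, rfl⟩, fun ⟨w', h, hw'⟩ => hN hw' ▸ h⟩

theorem nested_injective {N : LDag S} (hN : ∀ u v : N.V, N.equivTo N u v → u = v) :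
    N.nested.Injective := by
  intro u
  induction u using N.acyclic.induction with
  | _ u ih =>
  intro v h
  rcases nested_eq_nested_iff.mp h with ⟨hu, hv, hlab⟩ | ⟨hu, -, hc⟩
  · exact N.labInj u v hu hv hlab
  -- by induction `u` and `v` have the same children, so they are equivalent
  refine hN u v (equivTo_of_adj_iff hu fun w => ⟨fun huw => ?_, fun hvw => ?_⟩)
  · have hw : N.nested w ∈ N.nestedChildren v := hc ▸ mem_nestedChildren.mpr ⟨w, huw, rfl⟩
    obtain ⟨w', hvw', hw'⟩ := mem_nestedChildren.mp hw
    exact ih w huw hw'.symm ▸ hvw'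
  · have hw : N.nested w ∈ N.nestedChildren u := hc ▸ mem_nestedChildren.mpr ⟨w, hvw, rfl⟩
    obtain ⟨w', huw', hw'⟩ := mem_nestedChildren.mp hw
    exact ih w' huw' hw' ▸ huw'

namespace Iso

variable {N1 N2 : LDag S}

theorem isLeaf_apply_iff (e : Iso N1 N2) {u : N1.V} : N2.IsLeaf (e.toEquiv u) ↔ N1.IsLeaf u := by
  simp only [IsLeaf, e.toEquiv.forall_congr_right.symm, e.adj_iff]

theorem children_apply (e : Iso N1 N2) (u : N1.V) :
    N2.children (e.toEquiv u) = (N1.children u).map e.toEquiv.toEmbedding := by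
  ext w
  rw [Finset.mem_map_equiv, mem_children, mem_children, ← e.adj_iff, Equiv.apply_symm_apply]

theorem nested_apply (e : Iso N1 N2) (u : N1.V) : N2.nested (e.toEquiv u) = N1.nested u := by
  induction u using N1.acyclic.induction with
  | _ u ih =>
  refine nested_eq_nested_iff.mpr ?_
  by_cases hu : N1.IsLeaf u
  · exact .inl ⟨e.isLeaf_apply_iff.mpr hu, hu, e.lab_leaf u hu⟩
  refine .inr ⟨e.isLeaf_apply_iff.not.mpr hu, hu, ?_⟩
  rw [nestedChildren, nestedChildren, children_apply, Finset.map_val, Multiset.map_map]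
  exact Multiset.map_congr rfl fun w hw => ih w (mem_children.mp hw)

theorem upsilonM_eq (e : Iso N1 N2) : N1.UpsilonM = N2.UpsilonM := by
  rw [UpsilonM, UpsilonM, ← Multiset.map_univ_val_equiv e.toEquiv, Multiset.map_map]
  exact Multiset.map_congr rfl fun u _ => (e.nested_apply u).symm

noncomputable def ofNested (inj1 : N1.nested.Injective) (inj2 : N2.nested.Injective)
    (e : N1.V ≃ N2.V) (he : ∀ u, N2.nested (e u) = N1.nested u) : Iso N1 N2 where
  toEquiv := e
  adj_iff u w := by
    rw [adj_iff_nested_mem_nestedChildren inj1, adj_iff_nested_mem_nestedChildren inj2, he,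
      nestedChildren_eq_of_nested_eq (he u)]
  lab_leaf v hv := by
    rcases nested_eq_nested_iff.mp (he v) with ⟨-, -, hlab⟩ | ⟨-, hv', -⟩
    · exact hlab
    · exact absurd hv hv'

end Iso

theorem isIso_of_upsilonM_eq {N1 N2 : LDag S} (inj1 : N1.nested.Injective)
    (inj2 : N2.nested.Injective) (h : N1.UpsilonM = N2.UpsilonM) : N1.IsIso N2 :=
  let ⟨e, he⟩ := inj1.exists_equiv_of_map_univ_eq inj2 h
  ⟨Iso.ofNested inj1 inj2 e he⟩

end LDag

/-- If neither `S`-DAG contains two distinct equivalent nodes, then their multisets of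
equivalence classes (of nested labels, with multiplicities) coincide iff the `S`-DAGs
are isomorphic. -/
theorem upsilon_eq_iff_iso {S : Type} (N1 N2 : SDag S)
    (h1 : ∀ u v : N1.V, N1.toLDag.equivTo N1.toLDag u v → u = v)
    (h2 : ∀ u v : N2.V, N2.toLDag.equivTo N2.toLDag u v → u = v) :
    N1.toLDag.UpsilonM = N2.toLDag.UpsilonM ↔ N1.toLDag.IsIso N2.toLDag :=
  ⟨LDag.isIso_of_upsilonM_eq (LDag.nested_injective h1) (LDag.nested_injective h2),
    fun ⟨e⟩ => e.upsilonM_eq⟩
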